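/- arXiv:1911.11529 — 10 statements merged into one kernel-verified Lean document; each statement's English description precedes it below -/
import Mathlib

section
/- Let 𝐅 = (𝒜, a₀, ω) be an ℒ-DT ΣX-recognizer. Then the range of Φ_𝐅 is contained in the (finite) ∧-subsemilattice of ℒ generated by the finite set {ω_x(a) | x ∈ X, a ∈ A}; in particular, the range of any DT-recognizable ℒ-fuzzy tree language is finite. -/
/-- Trees over a ranked alphabet `σ` (with arity map `ar`) and leaf alphabet `X`. -/
inductive FTree (σ : Type) (ar : σ → ℕ) (X : Type) : Type where
  | leaf : X → FTree σ ar X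
  | node : (f : σ) → (Fin (ar f) → FTree σ ar X) → FTree σ ar X

/-- The path alphabet Γ: pairs (f, i) with i < arity of f. -/
abbrev PathSym (σ : Type) (ar : σ → ℕ) : Type := (f : σ) × Fin (ar f)

variable {σ X : Type} {ar : σ → ℕ}

/-- The set of paths of a tree: words over Γ ending in a leaf symbol. -/
def FTree.paths : FTree σ ar X → Set (List (PathSym σ ar) × X)
  | .leaf x => {([], x)}
  | .node f ts => {p | ∃ (i : Fin (ar f)) (w : List (PathSym σ ar)) (x : X),
      p = (⟨f, i⟩ :: w, x) ∧ (w, x) ∈ (ts i).paths}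

variable {A : Type}

/-- Action of a path word in a DT algebra. -/
def dtState (op : (f : σ) → A → Fin (ar f) → A) : List (PathSym σ ar) → A → A
  | [], a => a
  | ⟨f, i⟩ :: w, a => dtState op w (op f a i)

/-- The fuzzy tree language computed by an L-DT recognizer from state `a`. -/
def phi {L : Type} [SemilatticeInf L] [OrderTop L]
    (op : (f : σ) → A → Fin (ar f) → A) (ω : X → A → L) : A → FTree σ ar X → L
  | a, .leaf x => ω x a
  | a, .node f ts => Finset.univ.inf fun i => phi op ω (op f a i) (ts i)

/-- The ∧-subsemilattice generated by a subset `R` of a lattice: all finite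
nonempty meets of elements of `R`. -/
inductive MeetGen {L : Type} [SemilatticeInf L] (R : Set L) : L → Prop
  | base {a : L} : a ∈ R → MeetGen R a
  | inf {a b : L} : MeetGen R a → MeetGen R b → MeetGen R (a ⊓ b)

theorem MeetGen.finset_inf {L ι : Type} [SemilatticeInf L] [OrderTop L] {R : Set L}
    {s : Finset ι} (hs : s.Nonempty) {g : ι → L}
    (h : ∀ i ∈ s, MeetGen R (g i)) : MeetGen R (s.inf g) := by
  induction hs using Finset.Nonempty.cons_induction with
  | singleton i => simpa using h i (by simp)
  | cons i s hi hs ihs =>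
    rw [Finset.inf_cons]
    exact MeetGen.inf (h i (by simp)) (ihs fun j hj => h j (by simp [hj]))

/-- the range of Φ_𝐅 is contained in the ∧-subsemilattice of ℒ
generated by the finite set {ω_x(a) | x ∈ X, a ∈ A}; in particular the range
of any DT-recognizable ℒ-fuzzy tree language is finite. -/
theorem range_phi_subset_infClosure {L : Type} [Lattice L] [BoundedOrder L]
    [Fintype A] [Fintype X] (har : ∀ f : σ, 1 ≤ ar f)
    (op : (f : σ) → A → Fin (ar f) → A) (a₀ : A) (ω : X → A → L) :
    (∀ t : FTree σ ar X, MeetGen {c | ∃ x a, ω x a = c} (phi op ω a₀ t)) ∧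
      (Set.range fun t : FTree σ ar X => phi op ω a₀ t).Finite := by
  classical
  have key : ∀ (t : FTree σ ar X) (a : A),
      MeetGen {c | ∃ x a, ω x a = c} (phi op ω a t) := by
    intro t
    induction t with
    | leaf x => intro a; exact MeetGen.base ⟨x, a, rfl⟩
    | node f ts ih =>
      intro a
      have hne : (Finset.univ : Finset (Fin (ar f))).Nonempty := by
        have : 0 < ar f := har f
        exact ⟨⟨0, this⟩, Finset.mem_univ _⟩
      exact MeetGen.finset_inf hne fun i _ => ih i (op f a i)
  refine ⟨fun t => key t a₀, ?_⟩
  have rep : ∀ c, MeetGen {c | ∃ x a, ω x a = c} c →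
      ∃ s : Finset (X × A), c = s.inf fun p => ω p.1 p.2 := by
    intro c h
    induction h with
    | base hc =>
      obtain ⟨x, a, rfl⟩ := hc
      exact ⟨{(x, a)}, by simp⟩
    | inf _ _ ihb ihc =>
      obtain ⟨s, rfl⟩ := ihb
      obtain ⟨u, rfl⟩ := ihc
      exact ⟨s ∪ u, (Finset.inf_union).symm⟩
  have : (Set.range fun t : FTree σ ar X => phi op ω a₀ t) ⊆
      Set.range fun s : Finset (X × A) => s.inf fun p => ω p.1 p.2 := by
    rintro c ⟨t, rfl⟩
    obtain ⟨s, hs⟩ := rep _ (key t a₀)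
    exact ⟨s, hs.symm⟩
  exact (Set.finite_range _).subset this
end

section
/- Pumping Lemma for ℒ-fuzzy DT tree recognizers: Let 𝐅 = (𝒜, a₀, ω) be an n-state ℒ-DT ΣX-recognizer and ℓ the cardinality of the ∧-subsemilattice D_ω generated by {ω_x(a) | x ∈ X, a ∈ A}. If t is a ΣX-tree of height ≥ (ℓ+1)n + 1, then there exist a tree s and contexts p, q with depth(q) ≥ 1 such that t = p·q·s and Φ_𝐅(p·q^k·s) = Φ_𝐅(t) for every k ≥ 0. -/
variable {σ X : Type} {ar : σ → ℕ}

variable {A : Type}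

/-- ΣX-contexts: trees with exactly one occurrence of the extra symbol ξ
(located along the designated branch). -/
inductive Ctx (σ : Type) (ar : σ → ℕ) (X : Type) : Type where
  | hole : Ctx σ ar X
  | node : (f : σ) → (i : Fin (ar f)) → (Fin (ar f) → FTree σ ar X) →
      Ctx σ ar X → Ctx σ ar X

/-- Substituting a tree for ξ in a context. -/
def Ctx.app : Ctx σ ar X → FTree σ ar X → FTree σ ar X
  | .hole, t => t
  | .node f i ts c, t => .node f (Function.update ts i (c.app t))

/-- Composition of contexts: (p.comp q).app t = p.app (q.app t). -/
def Ctx.comp : Ctx σ ar X → Ctx σ ar X → Ctx σ ar X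
  | .hole, q => q
  | .node f i ts c, q => .node f i ts (c.comp q)

/-- The depth of a context. -/
def Ctx.depth : Ctx σ ar X → ℕ
  | .hole => 0
  | .node _ _ _ c => c.depth + 1

/-- Iterated composition q^k of a context with itself. -/
def Ctx.pow (q : Ctx σ ar X) : ℕ → Ctx σ ar X
  | 0 => .hole
  | k + 1 => q.comp (q.pow k)

/-- The height of a tree. -/
def FTree.height : FTree σ ar X → ℕ
  | .leaf _ => 0
  | .node _ ts => (Finset.univ.sup fun i => (ts i).height) + 1

/-- The state p^𝒜(a) reached at the ξ-leaf of a context. -/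
def ctxState (op : (f : σ) → A → Fin (ar f) → A) : Ctx σ ar X → A → A
  | .hole, a => a
  | .node f i _ c, a => ctxState op c (op f a i)

/-- The value Φ_{𝐅,a}(p) of a context: the meet of the leaf weights of the run
on p from a, the ξ-leaf contributing ⊤. -/
def ctxPhi {L : Type} [SemilatticeInf L] [OrderTop L]
    (op : (f : σ) → A → Fin (ar f) → A) (ω : X → A → L) : Ctx σ ar X → A → L
  | .hole, _ => ⊤
  | .node f i ts c, a =>
      ((Finset.univ.erase i).inf fun j => phi op ω (op f a j) (ts j)) ⊓
        ctxPhi op ω c (op f a i)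

namespace Ctx

def take : ℕ → Ctx σ ar X → Ctx σ ar X
  | 0, _ => .hole
  | _ + 1, .hole => .hole
  | m + 1, .node f i ts c => .node f i ts (take m c)

def drop : ℕ → Ctx σ ar X → Ctx σ ar X
  | 0, c => c
  | _ + 1, .hole => .hole
  | m + 1, .node _ _ _ c => drop m c

@[simp]
theorem take_hole (m : ℕ) : (hole : Ctx σ ar X).take m = .hole := by
  cases m <;> rfl

theorem app_comp (p q : Ctx σ ar X) (t : FTree σ ar X) :
    (p.comp q).app t = p.app (q.app t) := by
  induction p with
  | hole => rfl
  | node f i ts c ih => simp only [comp, app, ih]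

theorem app_pow_one (q : Ctx σ ar X) (t : FTree σ ar X) : (q.pow 1).app t = q.app t :=
  app_comp q .hole t

theorem take_comp_drop (m : ℕ) (c : Ctx σ ar X) : (c.take m).comp (c.drop m) = c := by
  induction m generalizing c with
  | zero => rfl
  | succ m ih => cases c with
    | hole => rfl
    | node f i ts c => simp only [take, drop, comp, ih]

theorem depth_take (m : ℕ) (c : Ctx σ ar X) : (c.take m).depth = min m c.depth := by
  induction m generalizing c with
  | zero => simp [take, depth]
  | succ m ih => cases c with
    | hole => simp [depth]
    | node f i ts c => simp only [take, depth, ih]; omega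

theorem depth_drop (m : ℕ) (c : Ctx σ ar X) : (c.drop m).depth = c.depth - m := by
  induction m generalizing c with
  | zero => rfl
  | succ m ih => cases c with
    | hole => simp [drop, depth]
    | node f i ts c => simp only [drop, depth, ih]; omega

theorem take_add (i m : ℕ) (c : Ctx σ ar X) :
    c.take (i + m) = (c.take i).comp ((c.drop i).take m) := by
  induction i generalizing c with
  | zero => simp [take, drop, comp]
  | succ i ih => cases c with
    | hole => simp [drop, comp]
    | node f j ts c => rw [Nat.add_right_comm]; simp only [take, drop, comp, ih]

end Ctx

theorem FTree.exists_eq_app_of_lt_height (t : FTree σ ar X) {m : ℕ} (hm : m < t.height) :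
    ∃ (c : Ctx σ ar X) (s : FTree σ ar X), c.depth = m ∧ t = c.app s := by
  induction t generalizing m with
  | leaf x => simp [height] at hm
  | node f ts ih =>
    cases m with
    | zero => exact ⟨.hole, .node f ts, rfl, rfl⟩
    | succ m =>
      obtain ⟨i, -, hi⟩ := Finset.lt_sup_iff.1 (Nat.lt_of_succ_lt_succ hm)
      obtain ⟨c, s, rfl, hs⟩ := ih i hi
      refine ⟨.node f i ts c, s, rfl, ?_⟩
      rw [Ctx.app, ← hs, Function.update_eq_self]

section Run

variable {L : Type} [SemilatticeInf L] [OrderTop L]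
  (op : (f : σ) → A → Fin (ar f) → A) (ω : X → A → L)

theorem ctxState_comp (p q : Ctx σ ar X) (a : A) :
    ctxState op (p.comp q) a = ctxState op q (ctxState op p a) := by
  induction p generalizing a with
  | hole => rfl
  | node f i ts c ih => simp only [Ctx.comp, ctxState, ih]

theorem ctxPhi_comp (p q : Ctx σ ar X) (a : A) :
    ctxPhi op ω (p.comp q) a = ctxPhi op ω p a ⊓ ctxPhi op ω q (ctxState op p a) := by
  induction p generalizing a with
  | hole => simp [Ctx.comp, ctxPhi, ctxState]
  | node f i ts c ih => simp only [Ctx.comp, ctxPhi, ctxState, ih, inf_assoc]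

theorem phi_app (c : Ctx σ ar X) (t : FTree σ ar X) (a : A) :
    phi op ω a (c.app t) = ctxPhi op ω c a ⊓ phi op ω (ctxState op c a) t := by
  induction c generalizing a with
  | hole => simp [Ctx.app, ctxPhi, ctxState]
  | node f i ts c ih =>
    rw [Ctx.app, phi, ← Finset.insert_erase (Finset.mem_univ i), Finset.inf_insert,
      Function.update_self, ih, ctxPhi, ctxState,
      Finset.inf_congr rfl fun j hj => by rw [Function.update_of_ne (Finset.ne_of_mem_erase hj)]]
    ac_rfl

theorem ctxState_pow_of_loop {q : Ctx σ ar X} {a : A} (hq : ctxState op q a = a) (k : ℕ) :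
    ctxState op (q.pow k) a = a := by
  induction k with
  | zero => rfl
  | succ k ih => rw [Ctx.pow, ctxState_comp, hq, ih]

theorem le_ctxPhi_pow_of_loop {q : Ctx σ ar X} {a : A} {v : L} (hq : ctxState op q a = a)
    (hv : v ≤ ctxPhi op ω q a) (k : ℕ) : v ≤ ctxPhi op ω (q.pow k) a := by
  induction k with
  | zero => exact le_top
  | succ k ih => rw [Ctx.pow, ctxPhi_comp, hq]; exact le_inf hv ih

theorem phi_app_pow_app {p q : Ctx σ ar X} {a : A}
    (hstate : ctxState op q (ctxState op p a) = ctxState op p a)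
    (hval : ctxPhi op ω p a ≤ ctxPhi op ω q (ctxState op p a)) (s : FTree σ ar X) (k : ℕ) :
    phi op ω a (p.app ((q.pow k).app s)) = phi op ω a (p.app (q.app s)) := by
  have pumped : ∀ k, phi op ω a (p.app ((q.pow k).app s))
      = ctxPhi op ω p a ⊓ phi op ω (ctxState op p a) s := fun k => by
    rw [phi_app, phi_app, ctxState_pow_of_loop op hstate, ← inf_assoc,
      inf_eq_left.2 (le_ctxPhi_pow_of_loop op ω hstate hval k)]
  rw [pumped, ← Ctx.app_pow_one q, pumped]

theorem phi_mem_of_infClosed {S : Set L} (hS : InfClosed S) (htop : ⊤ ∈ S)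
    (hω : ∀ x a, ω x a ∈ S) (t : FTree σ ar X) (a : A) : phi op ω a t ∈ S := by
  induction t generalizing a with
  | leaf x => exact hω x a
  | node f ts ih => exact Finset.inf_induction htop (fun _ h₁ _ h₂ => hS h₁ h₂) fun i _ => ih i _

theorem ctxPhi_mem_of_infClosed {S : Set L} (hS : InfClosed S) (htop : ⊤ ∈ S)
    (hω : ∀ x a, ω x a ∈ S) (c : Ctx σ ar X) (a : A) : ctxPhi op ω c a ∈ S := by
  induction c generalizing a with
  | hole => exact htop
  | node f i ts c ih =>
    exact hS (Finset.inf_induction htop (fun _ h₁ _ h₂ => hS h₁ h₂)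
      fun j _ => phi_mem_of_infClosed op ω hS htop hω (ts j) _) (ih _)

end Run

theorem MeetGen.infClosed {L : Type} [SemilatticeInf L] (R : Set L) :
    InfClosed {c | MeetGen R c} :=
  fun _ ha _ hb => .inf ha hb

theorem MeetGen.mem_infClosure {L : Type} [SemilatticeInf L] {R : Set L} {c : L}
    (h : MeetGen R c) : c ∈ infClosure R := by
  induction h with
  | base h => exact subset_infClosure h
  | inf _ _ ha hb => exact infClosed_infClosure ha hb

theorem Set.Finite.setOf_meetGen {L : Type} [SemilatticeInf L] {R : Set L} (hR : R.Finite) :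
    {c | MeetGen R c}.Finite :=
  hR.infClosure.subset fun _ => MeetGen.mem_infClosure

theorem Nat.exists_lt_map_eq_of_ncard_le {β : Type*} {T : Set β} (hT : T.Finite) {m : ℕ}
    (hcard : T.ncard ≤ m) {g : ℕ → β} (hg : ∀ k ≤ m, g k ∈ T) :
    ∃ i j, i < j ∧ j ≤ m ∧ g i = g j := by
  obtain ⟨x, hx, y, hy, hne, hxy⟩ := Set.exists_ne_map_eq_of_ncard_lt_of_maps_to
    (s := Set.Iic m) (by rw [Set.ncard_Iic_nat]; omega) hg hT
  rcases hne.lt_or_gt with h | h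
  exacts [⟨x, y, h, hy, hxy⟩, ⟨y, x, h, hx, hxy.symm⟩]

theorem exists_pumping_of_take_eq {L : Type} [SemilatticeInf L] [OrderTop L]
    (op : (f : σ) → A → Fin (ar f) → A) (ω : X → A → L) (a : A)
    (c : Ctx σ ar X) (s₀ : FTree σ ar X) {i j : ℕ} (hij : i < j) (hj : j ≤ c.depth)
    (hstate : ctxState op (c.take i) a = ctxState op (c.take j) a)
    (hval : ctxPhi op ω (c.take i) a = ctxPhi op ω (c.take j) a) :
    ∃ (p q : Ctx σ ar X) (s : FTree σ ar X), 1 ≤ q.depth ∧ c.app s₀ = p.app (q.app s) ∧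
      ∀ k : ℕ, phi op ω a (p.app ((q.pow k).app s)) = phi op ω a (c.app s₀) := by
  have hpq : c.take j = (c.take i).comp ((c.drop i).take (j - i)) := by
    rw [← Ctx.take_add, Nat.add_sub_cancel' hij.le]
  have hdecomp : c.app s₀
      = (c.take i).app (((c.drop i).take (j - i)).app (((c.drop i).drop (j - i)).app s₀)) := by
    rw [← Ctx.app_comp ((c.drop i).take (j - i)), Ctx.take_comp_drop, ← Ctx.app_comp,
      Ctx.take_comp_drop]
  refine ⟨_, _, _, ?_, hdecomp, fun k => ?_⟩
  · rw [Ctx.depth_take, Ctx.depth_drop]; omega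
  · rw [hdecomp]
    refine phi_app_pow_app op ω ?_ ?_ _ k
    · rw [← ctxState_comp, ← hpq, hstate]
    · rw [hval, hpq, ctxPhi_comp]; exact inf_le_right

theorem fuzzy_dt_pumping_general {L : Type} [Lattice L] [BoundedOrder L]
    [Fintype A] [Fintype X]
    (op : (f : σ) → A → Fin (ar f) → A) (a₀ : A) (ω : X → A → L)
    (n ℓ : ℕ) (hn : n = Fintype.card A)
    (hℓ : ℓ = {c | MeetGen {c | ∃ x a, ω x a = c} c}.ncard)
    (t : FTree σ ar X) (ht : (ℓ + 1) * n + 1 ≤ t.height) :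
    ∃ (p q : Ctx σ ar X) (s : FTree σ ar X), 1 ≤ q.depth ∧
      t = p.app (q.app s) ∧
      ∀ k : ℕ, phi op ω a₀ (p.app ((q.pow k).app s)) = phi op ω a₀ t := by
  set V : Set L := insert ⊤ {c | MeetGen {c | ∃ x a, ω x a = c} c}
  have hVfin : V.Finite := .insert _ <| Set.Finite.setOf_meetGen <|
    (Set.finite_range fun xa : X × A => ω xa.1 xa.2).subset fun _ ⟨x, a, h⟩ => ⟨(x, a), h⟩
  have hcard : (Set.univ ×ˢ V : Set (A × L)).ncard ≤ (ℓ + 1) * n := by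
    rw [Set.ncard_prod, Set.ncard_univ, Nat.card_eq_fintype_card, ← hn, hℓ, mul_comm]
    exact Nat.mul_le_mul_right n (Set.ncard_insert_le _ _)
  have hV : ∀ c a, ctxPhi op ω c a ∈ V :=
    ctxPhi_mem_of_infClosed op ω ((MeetGen.infClosed _).insert_upperBounds fun _ _ => le_top)
      (Set.mem_insert _ _) fun x a => Set.mem_insert_of_mem _ (.base ⟨x, a, rfl⟩)
  obtain ⟨c, s, hc, rfl⟩ := t.exists_eq_app_of_lt_height ht
  obtain ⟨i, j, hij, hj, heq⟩ := Nat.exists_lt_map_eq_of_ncard_le (Set.finite_univ.prod hVfin)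
    hcard (g := fun k => (ctxState op (c.take k) a₀, ctxPhi op ω (c.take k) a₀))
    fun k _ => ⟨Set.mem_univ _, hV _ _⟩
  exact exists_pumping_of_take_eq op ω a₀ c s hij (hc ▸ hj)
    (congrArg Prod.fst heq) (congrArg Prod.snd heq)

/-- Pumping Lemma for ℒ-fuzzy DT tree recognizers: if 𝐅 is an
n-state ℒ-DT ΣX-recognizer and ℓ = |D_ω| where D_ω is the ∧-subsemilattice
generated by {ω_x(a) | x ∈ X, a ∈ A}, then any tree t of height ≥ (ℓ+1)n + 1
decomposes as t = p·q·s with depth(q) ≥ 1 and Φ_𝐅(p·qᵏ·s) = Φ_𝐅(t) for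
all k ≥ 0. -/
theorem fuzzy_dt_pumping {L : Type} [Lattice L] [BoundedOrder L]
    [Fintype A] [Fintype X] (har : ∀ f : σ, 1 ≤ ar f)
    (op : (f : σ) → A → Fin (ar f) → A) (a₀ : A) (ω : X → A → L)
    (n ℓ : ℕ) (hn : n = Fintype.card A)
    (hℓ : ℓ = {c | MeetGen {c | ∃ x a, ω x a = c} c}.ncard)
    (t : FTree σ ar X) (ht : (ℓ + 1) * n + 1 ≤ t.height) :
    ∃ (p q : Ctx σ ar X) (s : FTree σ ar X), 1 ≤ q.depth ∧
      t = p.app (q.app s) ∧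
      ∀ k : ℕ, phi op ω a₀ (p.app ((q.pow k).app s)) = phi op ω a₀ t :=
  fuzzy_dt_pumping_general op a₀ ω n ℓ hn hℓ t ht
end

section
/- If the bottom element 0 is ∧-irreducible in the bounded lattice ℒ (i.e., c > 0 and d > 0 imply c ∧ d > 0), then the support of every DT-recognizable ℒ-fuzzy tree language is a DT-recognizable tree language. -/
variable {σ X : Type} {ar : σ → ℕ}

variable {A : Type}

/-- Acceptance for an ordinary (crisp) DT recognizer: every leaf pair (x,b) of
the run from `a` satisfies b ∈ α x. -/
def dAccepts (op : (f : σ) → A → Fin (ar f) → A) (α : X → Set A) :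
    A → FTree σ ar X → Prop
  | a, .leaf x => a ∈ α x
  | a, .node f ts => ∀ i, dAccepts op α (op f a i) (ts i)

/-- A tree language is DT-recognizable if it is recognized by some finite
ordinary DT recognizer. -/
def DTRecLang {σ X : Type} {ar : σ → ℕ} (T : Set (FTree σ ar X)) : Prop :=
  ∃ (A : Type) (_ : Fintype A) (op : (f : σ) → A → Fin (ar f) → A)
    (a₀ : A) (α : X → Set A), T = {t | dAccepts op α a₀ t}

/-- An ℒ-fuzzy tree language is DT-recognizable if it is computed by some
finite ℒ-DT recognizer. -/
def DTRecFuzzy {σ X : Type} {ar : σ → ℕ} (L : Type) [Lattice L] [BoundedOrder L]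
    (Φ : FTree σ ar X → L) : Prop :=
  ∃ (A : Type) (_ : Fintype A) (op : (f : σ) → A → Fin (ar f) → A)
    (a₀ : A) (ω : X → A → L), ∀ t, Φ t = phi op ω a₀ t

/-!
Since `⊥` is meet-irreducible, a finite meet is positive exactly when each of its terms is
(the empty meet `⊤` included, as `⊥ ≠ ⊤`).
Hence the run of the fuzzy recognizer gives a positive value on `t` iff every leaf pair
`(x, b)` has `ω x b > ⊥`, so the same DT algebra with final sets `α x = {b | ⊥ < ω x b}`
recognizes the support.
-/

theorem infPrime_bot_of_bot_lt_inf {L : Type*} [SemilatticeInf L] [BoundedOrder L]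
    (hnt : (⊥ : L) ≠ ⊤) (hirr : ∀ c d : L, ⊥ < c → ⊥ < d → ⊥ < c ⊓ d) :
    InfPrime (⊥ : L) := by
  refine ⟨fun h => hnt h.eq_top, fun c d hcd => ?_⟩
  simp only [le_bot_iff] at hcd ⊢
  by_contra! hc
  exact (hirr c d (bot_lt_iff_ne_bot.2 hc.1) (bot_lt_iff_ne_bot.2 hc.2)).ne' hcd

theorem InfPrime.bot_lt_finset_inf_iff {L ι : Type*} [SemilatticeInf L] [BoundedOrder L]
    (h : InfPrime (⊥ : L)) {s : Finset ι} {g : ι → L} :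
    ⊥ < s.inf g ↔ ∀ i ∈ s, ⊥ < g i := by
  simp only [bot_lt_iff_ne_bot, Ne, ← le_bot_iff, h.finset_inf_le, not_exists, not_and]

theorem InfPrime.bot_lt_phi_iff_dAccepts {L : Type} [SemilatticeInf L] [BoundedOrder L]
    (h : InfPrime (⊥ : L)) (op : (f : σ) → A → Fin (ar f) → A) (ω : X → A → L)
    (t : FTree σ ar X) (a : A) :
    ⊥ < phi op ω a t ↔ dAccepts op (fun x => {b | ⊥ < ω x b}) a t := by
  induction t generalizing a with
  | leaf x => rfl
  | node f ts ih =>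
    simp only [phi, dAccepts, h.bot_lt_finset_inf_iff, Finset.mem_univ, true_imp_iff, ih]

theorem support_dtrec_of_meet_irreducible_general {L : Type} [Lattice L] [BoundedOrder L]
    (hnt : (⊥ : L) ≠ ⊤)
    (hirr : ∀ c d : L, ⊥ < c → ⊥ < d → ⊥ < c ⊓ d)
    (Φ : FTree σ ar X → L) (hΦ : DTRecFuzzy L Φ) :
    DTRecLang {t | ⊥ < Φ t} := by
  obtain ⟨A, hA, op, a₀, ω, hω⟩ := hΦ
  refine ⟨A, hA, op, a₀, fun x => {b | ⊥ < ω x b}, Set.ext fun t => ?_⟩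
  simpa only [Set.mem_ofPred_eq, hω] using
    (infPrime_bot_of_bot_lt_inf hnt hirr).bot_lt_phi_iff_dAccepts op ω t a₀

/-- if ⊥ is ∧-irreducible in ℒ (c > ⊥ and d > ⊥ imply
c ⊓ d > ⊥), then the support of every DT-recognizable ℒ-fuzzy tree language
is a DT-recognizable tree language. -/
theorem support_dtrec_of_meet_irreducible {L : Type} [Lattice L] [BoundedOrder L]
    (hnt : (⊥ : L) ≠ ⊤) (har : ∀ f : σ, 1 ≤ ar f)
    (hirr : ∀ c d : L, ⊥ < c → ⊥ < d → ⊥ < c ⊓ d)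
    (Φ : FTree σ ar X → L) (hΦ : DTRecFuzzy L Φ) :
    DTRecLang {t | ⊥ < Φ t} :=
  support_dtrec_of_meet_irreducible_general hnt hirr Φ hΦ
end

section
/- Every c-cut Φ_{≥c} = {t | Φ(t) ≥ c} of a DT-recognizable ℒ-fuzzy tree language Φ is a DT-recognizable tree language; conversely, for any c ∈ L with c > 0, every DT-recognizable tree language T is the c-cut of some DT-recognizable ℒ-fuzzy tree language. -/
variable {σ X : Type} {ar : σ → ℕ}

variable {A : Type}

/-- every c-cut of a DT-recognizable ℒ-fuzzy tree language is a
DT-recognizable tree language; conversely, for c > ⊥, every DT-recognizable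
tree language is the c-cut of some DT-recognizable ℒ-fuzzy tree language. -/
theorem cuts_dtrec {L : Type} [Lattice L] [BoundedOrder L]
    (hnt : (⊥ : L) ≠ ⊤) (har : ∀ f : σ, 1 ≤ ar f) :
    (∀ (Φ : FTree σ ar X → L) (c : L), DTRecFuzzy L Φ →
        DTRecLang {t | c ≤ Φ t}) ∧
      (∀ (T : Set (FTree σ ar X)) (c : L), ⊥ < c → DTRecLang T →
        ∃ Φ : FTree σ ar X → L, DTRecFuzzy L Φ ∧ T = {t | c ≤ Φ t}) := by
  constructor
  · rintro Φ c ⟨A, hA, op, a₀, ω, hΦ⟩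
    refine ⟨A, hA, op, a₀, fun x => {a | c ≤ ω x a}, ?_⟩
    ext t
    simp only [Set.mem_setOf_eq, hΦ]
    clear hΦ
    induction t generalizing a₀ with
    | leaf x => rfl
    | node f ts ih =>
      simp [phi, dAccepts, Finset.le_inf_iff, ih]
  · rintro T c hc ⟨A, hA, op, a₀, α, hT⟩
    classical
    refine ⟨fun t => phi op (fun x a => if a ∈ α x then ⊤ else ⊥) a₀ t,
      ⟨A, hA, op, a₀, _, fun t => rfl⟩, ?_⟩
    rw [hT]; clear hT; ext t
    simp only [Set.mem_setOf_eq]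
    induction t generalizing a₀ with
    | leaf x =>
      simp only [dAccepts, phi]
      split
      · simp [le_top, *]
      · simp only [le_bot_iff]
        exact ⟨fun h => absurd h ‹_›, fun h => absurd h.symm hc.ne⟩
    | node f ts ih =>
      simp [phi, dAccepts, Finset.le_inf_iff, ih]
end

section
/- The family of DT-recognizable ℒ-fuzzy tree languages over fixed Σ, X is closed under finite intersection: if Φ and Ψ are recognized by ℒ-DT ΣX-recognizers, so is Φ ∩ Ψ, where (Φ ∩ Ψ)(t) = Φ(t) ∧ Ψ(t). -/
variable {σ X : Type} {ar : σ → ℕ}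

variable {A : Type}

lemma phi_prod {L : Type} [Lattice L] [BoundedOrder L] {A B : Type}
    (op : (f : σ) → A → Fin (ar f) → A) (op' : (f : σ) → B → Fin (ar f) → B)
    (ω : X → A → L) (π : X → B → L) (t : FTree σ ar X) :
    ∀ a b, phi (fun f p i => (op f p.1 i, op' f p.2 i))
      (fun x p => ω x p.1 ⊓ π x p.2) (a, b) t = phi op ω a t ⊓ phi op' π b t := by
  induction t with
  | leaf x => intro a b; rfl
  | node f ts ih =>
    intro a b
    simp only [phi, ih]
    apply le_antisymm
    · exact le_inf (Finset.le_inf fun i hi => (Finset.inf_le hi).trans inf_le_left)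
        (Finset.le_inf fun i hi => (Finset.inf_le hi).trans inf_le_right)
    · exact Finset.le_inf fun i hi =>
        le_inf (inf_le_left.trans (Finset.inf_le hi))
          (inf_le_right.trans (Finset.inf_le hi))

/-- DT-recognizable ℒ-fuzzy tree languages are closed under
intersection: (Φ ∩ Ψ)(t) = Φ(t) ∧ Ψ(t). -/
theorem dtrec_inter {L : Type} [Lattice L] [BoundedOrder L]
    (har : ∀ f : σ, 1 ≤ ar f) (Φ Ψ : FTree σ ar X → L)
    (hΦ : DTRecFuzzy L Φ) (hΨ : DTRecFuzzy L Ψ) :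
    DTRecFuzzy L (fun t => Φ t ⊓ Ψ t) := by
  obtain ⟨A, _, op, a₀, ω, hω⟩ := hΦ
  obtain ⟨B, _, op', b₀, π, hπ⟩ := hΨ
  exact ⟨A × B, inferInstance, fun f p i => (op f p.1 i, op' f p.2 i), (a₀, b₀),
    fun x p => ω x p.1 ⊓ π x p.2,
    fun t => by simp only [hω, hπ, phi_prod]⟩
end

section
/- DT-recognizable ℒ-fuzzy tree languages are closed under inverse context translations and context translations: if Φ is DT-recognizable and p is a ΣX-context, then both p^{-1}(Φ), defined by p^{-1}(Φ)(t) = Φ(p(t)), and p(Φ), defined by p(Φ)(t) = Φ(s) if t = p(s) for some tree s and 0 otherwise, are DT-recognizable. -/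
variable {σ X : Type} {ar : σ → ℕ}

variable {A : Type}

open Classical in
/-- The translation p(Φ): value Φ(s) on trees of the form p(s), and ⊥
elsewhere (the substitution t ↦ p(t) is injective, so s is unique). -/
noncomputable def ctxImage {L : Type} [Lattice L] [BoundedOrder L]
    (p : Ctx σ ar X) (Φ : FTree σ ar X → L) (t : FTree σ ar X) : L :=
  if h : ∃ s, p.app s = t then Φ h.choose else ⊥

/-!
A deterministic run on `p(t)` reaches a state `a` at the hole that does not depend on `t`,
and the subtrees hanging off the path to the hole contribute a value `K` that does not
depend on `t` either, so `Φ (p(t)) = K ⊓ Φₐ(t)`. Since every symbol has a child, every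
tree has a leaf, so `K` can be folded into the leaf weights.

For `p(Φ)`, a rejecting sink state gives a recognizer for "the root is `f` and the `j`-th
child is weighted by `Ψ j`" from recognizers of the `Ψ j`. With crisp singletons as the `Ψ j`
this recognizes the singletons `{u}` by induction on `u`; with singletons off the path and
`c(Φ)` on it, it recognizes `(f(ts, c))(Φ)` by induction on the context.
-/

open Finset

section Runs
variable {L : Type} [Lattice L] [BoundedOrder L] {op : (f : σ) → A → Fin (ar f) → A}
  {ω : X → A → L}

lemma phi_node_le (a : A) (f : σ) (ts : Fin (ar f) → FTree σ ar X) (i : Fin (ar f)) :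
    phi op ω a (.node f ts) ≤ phi op ω (op f a i) (ts i) :=
  inf_le (mem_univ i)

lemma phi_sink_eq_bot (har : ∀ f : σ, 1 ≤ ar f) {s : A} (hop : ∀ f i, op f s i = s)
    (hω : ∀ x, ω x s = ⊥) (t : FTree σ ar X) : phi op ω s t = ⊥ := by
  induction t with
  | leaf x => exact hω x
  | node f ts ih =>
    exact le_bot_iff.mp ((phi_node_le s f ts ⟨0, har f⟩).trans_eq (by rw [hop, ih]))

lemma phi_node_eq_bot_of_sink (har : ∀ f : σ, 1 ≤ ar f) {s : A} (hop : ∀ f i, op f s i = s)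
    (hω : ∀ x, ω x s = ⊥) {a : A} {f : σ} (ts : Fin (ar f) → FTree σ ar X)
    (ha : ∀ i, op f a i = s) : phi op ω a (.node f ts) = ⊥ :=
  le_bot_iff.mp ((phi_node_le a f ts ⟨0, har f⟩).trans_eq
    (by rw [ha, phi_sink_eq_bot har hop hω]))

lemma phi_map {B : Type} {opB : (f : σ) → B → Fin (ar f) → B} {ωB : X → B → L} (h : B → A)
    (hop : ∀ f b i, op f (h b) i = h (opB f b i)) (hω : ∀ x b, ω x (h b) = ωB x b) (b : B)
    (t : FTree σ ar X) : phi op ω (h b) t = phi opB ωB b t := by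
  induction t generalizing b with
  | leaf x => exact hω x b
  | node f ts ih => simp only [phi, hop, ih]

lemma phi_const_inf (har : ∀ f : σ, 1 ≤ ar f) (K : L) (a : A) (t : FTree σ ar X) :
    phi op (fun x b => K ⊓ ω x b) a t = K ⊓ phi op ω a t := by
  induction t generalizing a with
  | leaf x => rfl
  | node f ts ih =>
    simp only [phi, ih]
    exact (inf_inf (f := fun _ => K)).trans (by rw [inf_const ⟨⟨0, har f⟩, mem_univ _⟩])

end Runs

lemma Finset.univ_inf_eq_inf_erase {L β : Type} [SemilatticeInf L] [OrderTop L] [Fintype β]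
    [DecidableEq β] (g : β → L) (i : β) : univ.inf g = g i ⊓ (univ.erase i).inf g := by
  rw [← inf_insert, insert_erase (mem_univ i)]

lemma Finset.inf_ite_top_bot {L β : Type} [Lattice L] [BoundedOrder L] (s : Finset β)
    (P : β → Prop) [DecidablePred P] :
    (s.inf fun j => if P j then ⊤ else ⊥ : L) = if ∀ j ∈ s, P j then ⊤ else ⊥ := by
  split_ifs with h
  · exact (Finset.inf_eq_top_iff _ _).mpr fun j hj => if_pos (h j hj)
  · obtain ⟨j, hj, hPj⟩ : ∃ j ∈ s, ¬ P j := by simpa using h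
    exact le_bot_iff.mp ((inf_le hj).trans_eq (if_neg hPj))

section InverseTranslation
variable {L : Type} [Lattice L] [BoundedOrder L]

def ctxRun (op : (f : σ) → A → Fin (ar f) → A) : Ctx σ ar X → A → A
  | .hole, a => a
  | .node f i _ c, a => ctxRun op c (op f a i)

def ctxConst (op : (f : σ) → A → Fin (ar f) → A) (ω : X → A → L) : Ctx σ ar X → A → L
  | .hole, _ => ⊤
  | .node f i ts c, a =>
      ((univ.erase i).inf fun j => phi op ω (op f a j) (ts j)) ⊓ ctxConst op ω c (op f a i)

lemma phi_ctx_app (op : (f : σ) → A → Fin (ar f) → A) (ω : X → A → L) (c : Ctx σ ar X)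
    (a : A) (t : FTree σ ar X) :
    phi op ω a (c.app t) = ctxConst op ω c a ⊓ phi op ω (ctxRun op c a) t := by
  induction c generalizing a with
  | hole => simp [Ctx.app, ctxConst, ctxRun]
  | node f i ts c ih =>
    have hside : ((univ.erase i).inf fun j =>
        phi op ω (op f a j) (Function.update ts i (c.app t) j)) =
        (univ.erase i).inf fun j => phi op ω (op f a j) (ts j) :=
      inf_congr rfl fun j hj => by rw [Function.update_of_ne (ne_of_mem_erase hj)]
    simp only [Ctx.app, phi]
    rw [univ_inf_eq_inf_erase _ i, hside, Function.update_self, ih, ctxConst, ctxRun]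
    ac_rfl

theorem DTRecFuzzy.comp_app (har : ∀ f : σ, 1 ≤ ar f) {Φ : FTree σ ar X → L}
    (hΦ : DTRecFuzzy L Φ) (p : Ctx σ ar X) : DTRecFuzzy L (fun t => Φ (p.app t)) := by
  obtain ⟨A, _, op, a₀, ω, hω⟩ := hΦ
  refine ⟨A, ‹_›, op, ctxRun op p a₀, fun x b => ctxConst op ω p a₀ ⊓ ω x b, fun t => ?_⟩
  show Φ (p.app t) = _
  rw [phi_const_inf har, hω, phi_ctx_app]

end InverseTranslation

section NodeRecognizer
variable {L : Type} [Lattice L] [BoundedOrder L] (f : σ) {B : Fin (ar f) → Type}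

open Classical in
/-- `none` is a rejecting sink, `some none` the initial state, which checks that the root is
`f` and starts the `j`-th recognizer on the `j`-th child; `some (some ⟨j, b⟩)` runs it. -/
noncomputable def nodeOp (op : ∀ j, (g : σ) → B j → Fin (ar g) → B j) (b₀ : ∀ j, B j) :
    (g : σ) → Option (Option (Σ j, B j)) → Fin (ar g) → Option (Option (Σ j, B j))
  | _, none, _ => none
  | g, some none, k =>
      if h : g = f then some (some ⟨Fin.cast (congrArg ar h) k, b₀ _⟩) else none
  | g, some (some ⟨j, b⟩), k => some (some ⟨j, op j g b k⟩)

def nodeOut (ω : ∀ j, X → B j → L) : X → Option (Option (Σ j, B j)) → L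
  | x, some (some ⟨j, b⟩) => ω j x b
  | _, _ => ⊥

theorem dtRecFuzzy_of_node (har : ∀ g : σ, 1 ≤ ar g) {Ψ : Fin (ar f) → FTree σ ar X → L}
    (hΨ : ∀ j, DTRecFuzzy L (Ψ j)) {Φ : FTree σ ar X → L} (h_leaf : ∀ x, Φ (.leaf x) = ⊥)
    (h_ne : ∀ g vs, g ≠ f → Φ (.node g vs) = ⊥)
    (h_node : ∀ vs, Φ (.node f vs) = univ.inf fun j => Ψ j (vs j)) : DTRecFuzzy L Φ := by
  choose B _ op b₀ ω hω using hΨ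
  have h_run (j : Fin (ar f)) (b : B j) (t : FTree σ ar X) :
      phi (nodeOp f op b₀) (nodeOut f ω) (some (some ⟨j, b⟩)) t = phi (op j) (ω j) b t :=
    phi_map (op := nodeOp f op b₀) (ω := nodeOut f ω) (fun b : B j => some (some ⟨j, b⟩))
      (fun _ _ _ => rfl) (fun _ _ => rfl) b t
  refine ⟨_, inferInstance, nodeOp f op b₀, some none, nodeOut f ω, ?_⟩
  rintro (x | ⟨g, vs⟩)
  · exact h_leaf x
  by_cases hg : g = f
  · subst hg
    rw [h_node]
    refine inf_congr rfl fun j _ => ?_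
    simp only [nodeOp, dif_pos, Fin.cast_eq_self, h_run, hω]
  · rw [h_ne g vs hg, phi_node_eq_bot_of_sink har (s := none) (fun _ _ => rfl) (fun _ => rfl)]
    exact fun k => dif_neg hg

end NodeRecognizer

section Translation
variable {L : Type} [Lattice L] [BoundedOrder L]

open Classical in
noncomputable def treeIndicator (u t : FTree σ ar X) : L :=
  if t = u then ⊤ else ⊥

lemma Ctx.app_injective (c : Ctx σ ar X) : Function.Injective c.app := by
  induction c with
  | hole => exact fun _ _ h => h
  | node f i ts c ih =>
    intro s s' h
    have hup := eq_of_heq ((FTree.node.injEq _ _ _ _).mp h).2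
    exact ih (by simpa using congrFun hup i)

lemma ctxImage_app (p : Ctx σ ar X) (Φ : FTree σ ar X → L) (s : FTree σ ar X) :
    ctxImage p Φ (p.app s) = Φ s := by
  have hex : ∃ s', p.app s' = p.app s := ⟨s, rfl⟩
  rw [ctxImage, dif_pos hex, p.app_injective hex.choose_spec]

lemma ctxImage_eq_bot {p : Ctx σ ar X} (Φ : FTree σ ar X → L) {t : FTree σ ar X}
    (h : ∀ s, p.app s ≠ t) : ctxImage p Φ t = ⊥ :=
  dif_neg fun ⟨s, hs⟩ => h s hs

lemma ctxImage_hole (Φ : FTree σ ar X → L) : ctxImage .hole Φ = Φ :=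
  funext (ctxImage_app .hole Φ)

lemma ctxImage_node_update (f : σ) (i : Fin (ar f)) (ts : Fin (ar f) → FTree σ ar X)
    (c : Ctx σ ar X) (Φ : FTree σ ar X → L) (w : FTree σ ar X) :
    ctxImage (.node f i ts c) Φ (.node f (Function.update ts i w)) = ctxImage c Φ w := by
  by_cases hw : ∃ s, c.app s = w
  · obtain ⟨s, rfl⟩ := hw
    exact (ctxImage_app (.node f i ts c) Φ s).trans (ctxImage_app c Φ s).symm
  · simp only [not_exists] at hw
    rw [ctxImage_eq_bot Φ hw, ctxImage_eq_bot Φ]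
    intro s hs
    have hup := eq_of_heq ((FTree.node.injEq _ _ _ _).mp hs).2
    exact hw s (by simpa using congrFun hup i)

lemma ctxImage_node_eq_bot {f : σ} {i : Fin (ar f)} {ts : Fin (ar f) → FTree σ ar X}
    (c : Ctx σ ar X) (Φ : FTree σ ar X → L) {vs : Fin (ar f) → FTree σ ar X} {j : Fin (ar f)}
    (hji : j ≠ i) (hj : vs j ≠ ts j) : ctxImage (.node f i ts c) Φ (.node f vs) = ⊥ := by
  refine ctxImage_eq_bot Φ fun s hs => hj ?_
  rw [← eq_of_heq ((FTree.node.injEq _ _ _ _).mp hs).2, Function.update_of_ne hji]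

lemma ctxImage_node_node (f : σ) (i : Fin (ar f)) (ts : Fin (ar f) → FTree σ ar X)
    (c : Ctx σ ar X) (Φ : FTree σ ar X → L) (vs : Fin (ar f) → FTree σ ar X) :
    ctxImage (.node f i ts c) Φ (.node f vs) =
      ctxImage c Φ (vs i) ⊓ (univ.erase i).inf fun j => treeIndicator (ts j) (vs j) := by
  by_cases h : ∀ j ∈ univ.erase i, vs j = ts j
  · have hvs : vs = Function.update ts i (vs i) := by
      ext j
      rcases eq_or_ne j i with rfl | hji
      · simp
      · rw [Function.update_of_ne hji, h j (mem_erase.mpr ⟨hji, mem_univ j⟩)]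
    have hside : ((univ.erase i).inf fun j => treeIndicator (ts j) (vs j) : L) = ⊤ :=
      (Finset.inf_eq_top_iff _ _).mpr fun j hj => by simp [treeIndicator, h j hj]
    rw [hside, inf_top_eq, hvs, ctxImage_node_update, Function.update_self]
  · obtain ⟨j, hj, hne⟩ : ∃ j ∈ univ.erase i, vs j ≠ ts j := by simpa using h
    have hside : ((univ.erase i).inf fun j => treeIndicator (ts j) (vs j) : L) = ⊥ :=
      le_bot_iff.mp ((inf_le hj).trans_eq (by simp [treeIndicator, hne]))
    rw [hside, inf_bot_eq, ctxImage_node_eq_bot c Φ (ne_of_mem_erase hj) hne]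

theorem dtRecFuzzy_treeIndicator (har : ∀ f : σ, 1 ≤ ar f) (u : FTree σ ar X) :
    DTRecFuzzy L (treeIndicator u) := by
  classical
  induction u with
  | leaf x₀ =>
    refine ⟨Bool, inferInstance, fun _ _ _ => false, true,
      fun x b => if b ∧ x = x₀ then ⊤ else ⊥, ?_⟩
    rintro (x | ⟨f, ts⟩)
    · simp [treeIndicator, phi]
    · rw [phi_node_eq_bot_of_sink har (s := false) (fun _ _ => rfl) (by simp) ts fun _ => rfl]
      simp [treeIndicator]
  | node f us ih =>
    refine dtRecFuzzy_of_node f har ih (fun x => by simp [treeIndicator])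
      (fun g vs hg => by simp [treeIndicator, hg]) fun vs => ?_
    simp only [treeIndicator, inf_ite_top_bot, mem_univ, true_implies, FTree.node.injEq,
      heq_eq_eq, true_and, funext_iff]

theorem DTRecFuzzy.ctxImage (har : ∀ f : σ, 1 ≤ ar f) {Φ : FTree σ ar X → L}
    (hΦ : DTRecFuzzy L Φ) (p : Ctx σ ar X) : DTRecFuzzy L (_root_.ctxImage p Φ) := by
  classical
  induction p with
  | hole => rwa [ctxImage_hole]
  | node f i ts c ih =>
    refine dtRecFuzzy_of_node f har
      (Ψ := Function.update (fun j => treeIndicator (ts j)) i (_root_.ctxImage c Φ))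
      (fun j => ?_) (fun x => ctxImage_eq_bot Φ nofun) (fun g vs hg => ctxImage_eq_bot Φ ?_)
      fun vs => ?_
    · rcases eq_or_ne j i with rfl | hji
      · simpa using ih
      · simpa [Function.update_of_ne hji] using dtRecFuzzy_treeIndicator har (ts j)
    · exact fun s hs => hg ((FTree.node.injEq _ _ _ _).mp hs).1.symm
    · rw [ctxImage_node_node, univ_inf_eq_inf_erase _ i, Function.update_self]
      exact congrArg _ (inf_congr rfl fun j hj => by
        rw [Function.update_of_ne (ne_of_mem_erase hj)])

end Translation

theorem dtrec_ctx_translations_general {L : Type} [Lattice L] [BoundedOrder L]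
    (har : ∀ f : σ, 1 ≤ ar f)
    (Φ : FTree σ ar X → L) (hΦ : DTRecFuzzy L Φ) (p : Ctx σ ar X) :
    DTRecFuzzy L (fun t => Φ (p.app t)) ∧ DTRecFuzzy L (ctxImage p Φ) :=
  ⟨hΦ.comp_app har p, hΦ.ctxImage har p⟩

/-- DT-recognizable ℒ-fuzzy tree languages are closed under
inverse context translations p⁻¹(Φ)(t) = Φ(p(t)) and under context
translations p(Φ). -/
theorem dtrec_ctx_translations {L : Type} [Lattice L] [BoundedOrder L]
    (hnt : (⊥ : L) ≠ ⊤) (har : ∀ f : σ, 1 ≤ ar f)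
    (Φ : FTree σ ar X → L) (hΦ : DTRecFuzzy L Φ) (p : Ctx σ ar X) :
    DTRecFuzzy L (fun t => Φ (p.app t)) ∧ DTRecFuzzy L (ctxImage p Φ) :=
  dtrec_ctx_translations_general har Φ hΦ p
end

section
/- If ψ : L → K is a finite-meet-preserving map between bounded lattices (preserving the top element), then the image ψ(Φ) of any DT-recognizable ℒ-fuzzy tree language Φ, defined by ψ(Φ)(t) = ψ(Φ(t)), is a DT-recognizable 𝒦-fuzzy tree language. -/
variable {σ X : Type} {ar : σ → ℕ}

variable {A : Type}

/-- if ψ : L → K preserves finite meets (binary meets and the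
top element), then the image ψ(Φ) of any DT-recognizable ℒ-fuzzy tree
language Φ is a DT-recognizable 𝒦-fuzzy tree language. -/
theorem dtrec_map {L K : Type} [Lattice L] [BoundedOrder L]
    [Lattice K] [BoundedOrder K]
    (hntL : (⊥ : L) ≠ ⊤) (hntK : (⊥ : K) ≠ ⊤) (har : ∀ f : σ, 1 ≤ ar f)
    (ψ : L → K) (hψinf : ∀ a b : L, ψ (a ⊓ b) = ψ a ⊓ ψ b)
    (hψtop : ψ ⊤ = ⊤)
    (Φ : FTree σ ar X → L) (hΦ : DTRecFuzzy L Φ) :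
    DTRecFuzzy K (fun t => ψ (Φ t)) := by
  obtain ⟨A, fA, op, a₀, ω, hω⟩ := hΦ
  refine ⟨A, fA, op, a₀, fun x a => ψ (ω x a), fun t => ?_⟩
  simp only [hω]
  clear hω
  generalize a₀ = a
  induction t generalizing a with
  | leaf x => rfl
  | node f ts ih =>
    show ψ (Finset.univ.inf _) = Finset.univ.inf _
    induction (Finset.univ : Finset (Fin (ar f))) using Finset.cons_induction with
    | empty => simpa using hψtop
    | cons i s hi ihs => simp [Finset.inf_cons, hψinf, ihs, ih]
end

section
/- An ℒ-fuzzy ΣX-tree language Φ is DT-recognizable if and only if Φ = δ̃^{-1}(Λ) for some DT-recognizable ℒ-fuzzy ΣX-path language Λ : T_Γ(X) → L. Consequently, every DT-recognizable ℒ-fuzzy tree language is path closed: Δ̃(Φ) = Φ. -/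
variable {σ X : Type} {ar : σ → ℕ}

variable {A : Type}

/-- δ̃(Φ): the fuzzy path language of a fuzzy tree language. -/
def tdel {L : Type} [CompleteLattice L] (Φ : FTree σ ar X → L)
    (r : List (PathSym σ ar) × X) : L :=
  ⨆ t ∈ {t : FTree σ ar X | r ∈ t.paths}, Φ t

/-- δ̃⁻¹(Λ): the fuzzy tree language of a fuzzy path language. -/
def tdelInv {L : Type} [CompleteLattice L] (Λ : List (PathSym σ ar) × X → L)
    (t : FTree σ ar X) : L :=
  ⨅ r ∈ t.paths, Λ r

/-- An ℒ-fuzzy path language Λ : T_Γ(X) → L is DT-recognizable if it is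
computed by a finite deterministic automaton over the (unary) path alphabet Γ
with fuzzy final states: Λ(wx) = ω_x(a₀ w). -/
def DTRecPath {σ X : Type} {ar : σ → ℕ} (L : Type) [Lattice L] [BoundedOrder L]
    (Λ : List (PathSym σ ar) × X → L) : Prop :=
  ∃ (A : Type) (_ : Fintype A) (d : PathSym σ ar → A → A)
    (a₀ : A) (ω : X → A → L),
    ∀ (w : List (PathSym σ ar)) (x : X),
      Λ (w, x) = ω x (List.foldl (fun a g => d g a) a₀ w)


lemma phi_eq_iInf {L : Type} [CompleteLattice L] (op : (f : σ) → A → Fin (ar f) → A)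
    (ω : X → A → L) (t : FTree σ ar X) (a : A) :
    phi op ω a t = ⨅ r ∈ t.paths, ω r.2 (dtState op r.1 a) := by
  induction t generalizing a with
  | leaf x => simp [phi, FTree.paths, dtState]
  | node f ts ih =>
    rw [phi, Finset.inf_eq_iInf]
    simp only [Finset.mem_univ, iInf_true]
    apply le_antisymm
    · apply le_iInf₂
      rintro r ⟨i, w, x', rfl, hw⟩
      refine iInf_le_of_le i ?_
      rw [ih i]
      exact iInf₂_le (w, x') hw
    · apply le_iInf
      intro i
      rw [ih i]
      apply le_iInf₂
      rintro ⟨w, x⟩ hw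
      exact iInf₂_le (((⟨f, i⟩ : PathSym σ ar) :: w, x)) ⟨i, w, x, rfl, hw⟩

lemma foldl_eq_dtState (d : PathSym σ ar → A → A) :
    ∀ (w : List (PathSym σ ar)) (a : A),
      List.foldl (fun a g => d g a) a w
        = dtState (fun f a i => d ⟨f, i⟩ a) w a := by
  intro w
  induction w with
  | nil => intro a; rfl
  | cons g w ih =>
    rintro a
    obtain ⟨f, i⟩ := g
    simp [List.foldl, dtState, ih]

/-- an ℒ-fuzzy tree language Φ is DT-recognizable iff
Φ = δ̃⁻¹(Λ) for some DT-recognizable ℒ-fuzzy path language Λ; consequently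
every DT-recognizable ℒ-fuzzy tree language is path closed,
Δ̃(Φ) = δ̃⁻¹(δ̃(Φ)) = Φ. -/
theorem dtrec_iff_path_lang {L : Type} [CompleteLattice L]
    (hnt : (⊥ : L) ≠ ⊤) (har : ∀ f : σ, 1 ≤ ar f) (Φ : FTree σ ar X → L) :
    (DTRecFuzzy L Φ ↔
      ∃ Λ : List (PathSym σ ar) × X → L, DTRecPath L Λ ∧ Φ = tdelInv Λ) ∧
    (DTRecFuzzy L Φ → tdelInv (tdel Φ) = Φ) := by
  have key : ∀ (A : Type) (op : (f : σ) → A → Fin (ar f) → A) (a₀ : A) (ω : X → A → L),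
      (∀ t, Φ t = phi op ω a₀ t) →
      Φ = tdelInv (fun r => ω r.2 (dtState op r.1 a₀)) := by
    intro A op a₀ ω h
    funext t
    rw [h t, phi_eq_iInf]
    rfl
  constructor
  · constructor
    · rintro ⟨A, fA, op, a₀, ω, h⟩
      refine ⟨fun r => ω r.2 (dtState op r.1 a₀),
        ⟨A, fA, fun g a => op g.1 a g.2, a₀, ω, ?_⟩, key A op a₀ ω h⟩
      intro w x
      rw [foldl_eq_dtState (fun g a => op g.1 a g.2)]
    · rintro ⟨Λ, ⟨A, fA, d, a₀, ω, hΛ⟩, rfl⟩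
      refine ⟨A, fA, fun f a i => d ⟨f, i⟩ a, a₀, ω, fun t => ?_⟩
      rw [phi_eq_iInf]
      unfold tdelInv
      refine iInf_congr fun r => iInf_congr fun hr => ?_
      obtain ⟨w, x⟩ := r
      rw [hΛ, foldl_eq_dtState d]
  · rintro ⟨A, fA, op, a₀, ω, h⟩
    funext t
    apply le_antisymm
    · have h2 : ∀ r ∈ t.paths, tdel Φ r ≤ ω r.2 (dtState op r.1 a₀) := by
        intro r _
        apply iSup₂_le
        intro s hs
        rw [h s, phi_eq_iInf]
        exact iInf₂_le r hs
      calc tdelInv (tdel Φ) t ≤ ⨅ r ∈ t.paths, ω r.2 (dtState op r.1 a₀) :=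
            iInf₂_mono h2
        _ = Φ t := by rw [h t, phi_eq_iInf]
    · apply le_iInf₂
      intro r hr
      exact le_iSup₂ (f := fun s _ => Φ s) t hr
end

section
/- Let 𝒞 be a nontrivial bounded chain and 𝐍𝐅 = (𝔄, I, ω) a 𝒞-fuzzy NDT ΣX-recognizer. For every tree t and every path r ∈ δ(t), Φ_{𝐍𝐅}(t) ≤ Λ_{𝐍𝐅}(r); hence δ̃(Φ_{𝐍𝐅}) ⊆ Λ_{𝐍𝐅}. -/
variable {σ X : Type} {ar : σ → ℕ}

variable {A : Type}

variable [DecidableEq A]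

/-- The fuzzy tree language computed from state `a` by a 𝒞-NDT recognizer
(values in a bounded chain 𝒞): sup over nondeterministic choices of the meet
over children. -/
def nphi {C : Type} [LinearOrder C] [BoundedOrder C]
    (op : (f : σ) → A → Finset (Fin (ar f) → A)) (ω : X → A → C) :
    A → FTree σ ar X → C
  | a, .leaf x => ω x a
  | a, .node f ts => (op f a).sup fun v =>
      Finset.univ.inf fun i => nphi op ω (v i) (ts i)

/-- The set of states a w^𝔄 reachable from `a` along the path word `w`. -/
def ndtStateF (op : (f : σ) → A → Finset (Fin (ar f) → A)) :
    List (PathSym σ ar) → A → Finset A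
  | [], a => {a}
  | ⟨f, i⟩ :: w, a => (op f a).biUnion fun v => ndtStateF op w (v i)

/-- Λ_{𝐍𝐅,a}(wx) = max{ω_x(b) | b ∈ a w^𝔄}. -/
def lambdaFrom {C : Type} [LinearOrder C] [BoundedOrder C]
    (op : (f : σ) → A → Finset (Fin (ar f) → A)) (ω : X → A → C)
    (a : A) (r : List (PathSym σ ar) × X) : C :=
  (ndtStateF op r.1 a).sup (ω r.2)

lemma nphi_le_lambdaFrom {C : Type} [LinearOrder C] [BoundedOrder C]
    (op : (f : σ) → A → Finset (Fin (ar f) → A)) (ω : X → A → C) :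
    ∀ (t : FTree σ ar X) (a : A), ∀ r ∈ t.paths,
      nphi op ω a t ≤ lambdaFrom op ω a r := by
  intro t
  induction t with
  | leaf x =>
    intro a r hr
    simp only [FTree.paths, Set.mem_singleton_iff] at hr
    subst hr
    simp [nphi, lambdaFrom, ndtStateF]
  | node f ts ih =>
    intro a r hr
    obtain ⟨i, w, x, rfl, hw⟩ := hr
    simp only [nphi]
    apply Finset.sup_le
    intro v hv
    calc (Finset.univ.inf fun j => nphi op ω (v j) (ts j))
        ≤ nphi op ω (v i) (ts i) := Finset.inf_le (Finset.mem_univ i)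
      _ ≤ lambdaFrom op ω (v i) (w, x) := ih i (v i) _ hw
      _ ≤ _ := by
          apply Finset.sup_le
          intro b hb
          exact Finset.le_sup (f := ω x)
            (Finset.mem_biUnion.2 ⟨v, hv, hb⟩)

/-- for a 𝒞-NDT recognizer 𝐍𝐅 over a nontrivial bounded chain,
Φ_{𝐍𝐅}(t) ≤ Λ_{𝐍𝐅}(r) for every path r of t; hence δ̃(Φ_{𝐍𝐅}) ⊆ Λ_{𝐍𝐅}. -/
theorem nphi_le_lambda {C : Type} [LinearOrder C] [BoundedOrder C]
    (hnt : (⊥ : C) ≠ ⊤) (har : ∀ f : σ, 1 ≤ ar f) [Fintype A]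
    (op : (f : σ) → A → Finset (Fin (ar f) → A)) (I : Finset A)
    (ω : X → A → C) :
    (∀ t : FTree σ ar X, ∀ r ∈ t.paths,
      (I.sup fun a => nphi op ω a t) ≤ I.sup fun a => lambdaFrom op ω a r) ∧
    (∀ (r : List (PathSym σ ar) × X) (c : C),
      IsLUB {v | ∃ t : FTree σ ar X, r ∈ t.paths ∧
          (I.sup fun a => nphi op ω a t) = v} c →
        c ≤ I.sup fun a => lambdaFrom op ω a r) := by
  have main : ∀ t : FTree σ ar X, ∀ r ∈ t.paths,
      (I.sup fun a => nphi op ω a t) ≤ I.sup fun a => lambdaFrom op ω a r := by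
    intro t r hr
    exact Finset.sup_mono_fun fun a _ => nphi_le_lambdaFrom op ω t a r hr
  refine ⟨main, fun r c hc => ?_⟩
  exact hc.2 fun v ⟨t, hr, hv⟩ => hv ▸ main t r hr
end

section
/- Let 𝒞 be a nontrivial bounded chain and 𝐍𝐅 a normalized 𝒞-fuzzy NDT ΣX-recognizer. Then the subset recognizer ℘𝐍𝐅 recognizes the fuzzy path closure of Φ_{𝐍𝐅}: Φ_{℘𝐍𝐅} = Δ̃(Φ_{𝐍𝐅}). -/
variable {σ X : Type} {ar : σ → ℕ}

variable {A : Type}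

variable [DecidableEq A]

/-- The subset algebra of an NDT algebra, as a deterministic top-down algebra
on finite sets of states. -/
def psOpF (op : (f : σ) → A → Finset (Fin (ar f) → A)) :
    (f : σ) → Finset A → Fin (ar f) → Finset A :=
  fun f H i => H.biUnion fun a => (op f a).image fun v => v i

/-- Upper bound: the value of any tree containing the path `(w, x)` is at most Λ. -/
lemma nphi_le_lambda_s19 {C : Type} [LinearOrder C] [BoundedOrder C]
    (op : (f : σ) → A → Finset (Fin (ar f) → A)) (ω : X → A → C) :
    ∀ (s : FTree σ ar X) (a : A) (w : List (PathSym σ ar)) (x : X),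
      (w, x) ∈ s.paths → nphi op ω a s ≤ (ndtStateF op w a).sup (ω x) := by
  intro s
  induction s with
  | leaf y =>
    intro a w x hw
    simp only [FTree.paths, Set.mem_singleton_iff, Prod.mk.injEq] at hw
    obtain ⟨rfl, rfl⟩ := hw
    simp [nphi, ndtStateF]
  | node f ts ih =>
    intro a w x hw
    simp only [FTree.paths, Set.mem_setOf_eq] at hw
    obtain ⟨i, w', x', heq, hmem⟩ := hw
    injection heq with h1 h2
    subst h1; subst h2
    simp only [nphi, ndtStateF]
    refine Finset.sup_le fun v hv => ?_
    calc (Finset.univ.inf fun j => nphi op ω (v j) (ts j))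
        ≤ nphi op ω (v i) (ts i) := Finset.inf_le (Finset.mem_univ i)
      _ ≤ (ndtStateF op w' (v i)).sup (ω x) := ih i (v i) w' x hmem
      _ ≤ ((op f a).biUnion fun v => ndtStateF op w' (v i)).sup (ω x) :=
          Finset.sup_mono (Finset.subset_biUnion_of_mem (fun v => ndtStateF op w' (v i)) hv)

/-- Key construction: for any state `c` reachable along `w` from `a`, there is a
tree containing the path `(w, x)` whose value from `a` is at least `ω x c`. -/
lemma exists_tree_path_ge {C : Type} [LinearOrder C] [BoundedOrder C]
    (op : (f : σ) → A → Finset (Fin (ar f) → A)) (ω : X → A → C) (M : A → C)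
    (hM : ∀ a, IsGreatest {c | ∃ t : FTree σ ar X, nphi op ω a t = c} (M a))
    (hnorm : ∀ (f : σ) (a : A), ∀ v ∈ op f a, ∀ i j, M (v i) = M (v j)) :
    ∀ (w : List (PathSym σ ar)) (a : A) (x : X) (c : A), c ∈ ndtStateF op w a →
      ∃ s : FTree σ ar X, (w, x) ∈ s.paths ∧ ω x c ≤ nphi op ω a s := by
  intro w
  induction w with
  | nil =>
    intro a x c hc
    simp only [ndtStateF, Finset.mem_singleton] at hc
    subst hc
    exact ⟨FTree.leaf x, by simp [FTree.paths], le_of_eq rfl⟩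
  | cons fi w' ihw =>
    obtain ⟨f, i⟩ := fi
    intro a x c hc
    simp only [ndtStateF, Finset.mem_biUnion] at hc
    obtain ⟨v, hv, hc⟩ := hc
    obtain ⟨s', hs'path, hs'ge⟩ := ihw (v i) x c hc
    choose F hF using fun j => (hM (v j)).1
    refine ⟨FTree.node f (Function.update F i s'), ?_, ?_⟩
    · refine ⟨i, w', x, rfl, ?_⟩
      simpa [Function.update_self] using hs'path
    · simp only [nphi]
      refine le_trans ?_ (Finset.le_sup hv)
      refine Finset.le_inf fun j _ => ?_
      by_cases hij : j = i
      · subst hij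
        simpa [Function.update_self] using hs'ge
      · rw [Function.update_of_ne hij, hF j]
        calc ω x c ≤ nphi op ω (v i) s' := hs'ge
          _ ≤ M (v i) := (hM (v i)).2 ⟨s', rfl⟩
          _ = M (v j) := hnorm f a v hv i j

/-- The state reached in the subset algebra is the union of reachable states. -/
lemma dtState_psOpF (op : (f : σ) → A → Finset (Fin (ar f) → A)) :
    ∀ (w : List (PathSym σ ar)) (H : Finset A),
      dtState (psOpF op) w H = H.biUnion (ndtStateF op w) := by
  intro w
  induction w with
  | nil => intro H; ext b; simp [dtState, ndtStateF]
  | cons fi w' ihw =>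
    obtain ⟨f, i⟩ := fi
    intro H
    rw [show dtState (psOpF op) (⟨f, i⟩ :: w') H
          = dtState (psOpF op) w' (psOpF op f H i) from rfl, ihw]
    ext b
    simp only [Finset.mem_biUnion, psOpF, Finset.mem_image, ndtStateF]
    constructor
    · rintro ⟨a', ⟨a, ha, v, hv, rfl⟩, hb⟩
      exact ⟨a, ha, v, hv, hb⟩
    · rintro ⟨a, ha, v, hv, hb⟩
      exact ⟨v i, ⟨a, ha, v, hv, rfl⟩, hb⟩

/-- A deterministic top-down recognizer's value is the inf over the path values. -/
lemma phi_isGLB_paths {C : Type} [LinearOrder C] [BoundedOrder C]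
    (dop : (f : σ) → Finset A → Fin (ar f) → Finset A) (ω : X → A → C) :
    ∀ (t : FTree σ ar X) (H : Finset A),
      IsGLB {c | ∃ r ∈ t.paths, (dtState dop r.1 H).sup (ω r.2) = c}
        (phi dop (fun x H => H.sup (ω x)) H t) := by
  intro t
  induction t with
  | leaf x =>
    intro H
    have hset : {c | ∃ r ∈ (FTree.leaf x : FTree σ ar X).paths,
        (dtState dop r.1 H).sup (ω r.2) = c} = {H.sup (ω x)} := by
      ext c
      simp [FTree.paths, dtState]
    rw [hset]
    simpa [phi] using isGLB_singleton (a := H.sup (ω x))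
  | node f ts ih =>
    intro H
    constructor
    · rintro c ⟨r, hr, rfl⟩
      simp only [FTree.paths, Set.mem_setOf_eq] at hr
      obtain ⟨i, w, x, rfl, hw⟩ := hr
      refine le_trans (Finset.inf_le (Finset.mem_univ i)) ?_
      exact (ih i (dop f H i)).1 ⟨(w, x), hw, rfl⟩
    · intro b hb
      refine Finset.le_inf fun i _ => (ih i (dop f H i)).2 ?_
      rintro c ⟨⟨w, x⟩, hw, rfl⟩
      exact hb ⟨(⟨f, i⟩ :: w, x), ⟨i, w, x, rfl, hw⟩, rfl⟩

/-- if 𝐍𝐅 = (𝔄, I, ω) is a normalized 𝒞-NDT recognizer over a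
nontrivial bounded chain 𝒞 (M(a) being the greatest value Φ_{𝐍𝐅,a}(t), and
all components of every transition having equal M-value), then the subset
recognizer ℘𝐍𝐅 recognizes the fuzzy path closure of Φ_{𝐍𝐅}:
Φ_{℘𝐍𝐅}(t) = Δ̃(Φ_{𝐍𝐅})(t) = min over r ∈ δ(t) of max over s with
r ∈ δ(s) of Φ_{𝐍𝐅}(s). -/
theorem subset_recognizer_path_closure {C : Type} [LinearOrder C]
    [BoundedOrder C] (hnt : (⊥ : C) ≠ ⊤) (har : ∀ f : σ, 1 ≤ ar f) [Fintype A]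
    (op : (f : σ) → A → Finset (Fin (ar f) → A)) (I : Finset A)
    (ω : X → A → C) (M : A → C)
    (hM : ∀ a, IsGreatest {c | ∃ t : FTree σ ar X, nphi op ω a t = c} (M a))
    (hnorm : ∀ (f : σ) (a : A), ∀ v ∈ op f a, ∀ i j, M (v i) = M (v j)) :
    ∀ t : FTree σ ar X, ∃ g : List (PathSym σ ar) × X → C,
      (∀ r, IsLUB {c | ∃ s : FTree σ ar X, r ∈ s.paths ∧
          (I.sup fun a => nphi op ω a s) = c} (g r)) ∧
      IsGLB {c | ∃ r ∈ t.paths, g r = c}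
        (phi (psOpF op) (fun x H => H.sup (ω x)) I t) := by
  intro t
  refine ⟨fun r => I.sup fun a => lambdaFrom op ω a r, fun r => ?_, ?_⟩
  · obtain ⟨w, x⟩ := r
    constructor
    · rintro c ⟨s, hs, rfl⟩
      exact Finset.sup_mono_fun fun a _ => nphi_le_lambda_s19 op ω s a w x hs
    · intro b hb
      refine Finset.sup_le fun a ha => ?_
      refine Finset.sup_le fun c hc => ?_
      obtain ⟨s, hspath, hsge⟩ := exists_tree_path_ge op ω M hM hnorm w a x c hc
      calc ω x c ≤ nphi op ω a s := hsge
        _ ≤ I.sup fun a' => nphi op ω a' s := Finset.le_sup (f := fun a' => nphi op ω a' s) ha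
        _ ≤ b := hb ⟨s, hspath, rfl⟩
  · have hpt : ∀ r : List (PathSym σ ar) × X,
        (I.sup fun a => lambdaFrom op ω a r)
          = (dtState (psOpF op) r.1 I).sup (ω r.2) := by
      intro r
      rw [dtState_psOpF, Finset.sup_biUnion]
      rfl
    have hset : {c | ∃ r ∈ t.paths, (I.sup fun a => lambdaFrom op ω a r) = c}
        = {c | ∃ r ∈ t.paths, (dtState (psOpF op) r.1 I).sup (ω r.2) = c} := by
      ext c
      constructor
      · rintro ⟨r, hr, rfl⟩; exact ⟨r, hr, (hpt r).symm⟩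
      · rintro ⟨r, hr, rfl⟩; exact ⟨r, hr, hpt r⟩
    rw [hset]
    exact phi_isGLB_paths (psOpF op) ω t I
end
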